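/- Let n ≥ 2 and let k := ⌊n/2⌋ − 1 (the greatest integer with 2k + 2 ≤ n). Then the map (ℤ/2)^{k+1} → G(𝔽₂[x]/(xⁿ)) sending (e₀, …, e_k) (with each eᵢ ∈ {0, 1}) to the square class of the unit ∏_{i=0}^{k} (1 + x^{2i+1})^{eᵢ} is an isomorphism of abelian groups; in particular, the square classes [1+x], [1+x³], …, [1+x^{2k+1}] form a basis of G(𝔽₂[x]/(xⁿ)) as an 𝔽₂-vector space. -/

import Mathlib

/-!
Over `𝔽₂` squaring is additive, so a square in `𝔽₂[x]/(xⁿ)` has no odd-degree terms. Hence a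
nontrivial product of the `1 + x^{2i+1}` is never a square: reducing it modulo `x^{2j+2}`, for `j`
the least index that occurs, leaves `1 + x^{2j+1}`. Conversely, a unit `1 + x^d b` with `b(0) = 1`
becomes `1 + x^{d+1} b'` after multiplication by `1 + x^d`, which is a generator for odd `d` and
the square `(1 + x^{d/2})²` for even `d`; induction on `d` shows that the classes span.
-/

noncomputable section

def squareUnits (R : Type) [CommRing R] : Subgroup Rˣ :=
  (powMonoidHom 2 : Rˣ →* Rˣ).range

def SqCl (R : Type) [CommRing R] : Type := Rˣ ⧸ squareUnits R

instance (R : Type) [CommRing R] : CommGroup (SqCl R) :=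
  QuotientGroup.Quotient.commGroup (squareUnits R)

def cls {R : Type} [CommRing R] (a : Rˣ) : SqCl R := QuotientGroup.mk a

/-- The group homomorphism on square classes induced by a ring homomorphism. -/
def clsMap {R S : Type} [CommRing R] [CommRing S] (φ : R →+* S) : SqCl R →* SqCl S :=
  QuotientGroup.map (squareUnits R) (squareUnits S) (Units.map (φ : R →* S)) (by
    rintro x ⟨y, rfl⟩
    exact ⟨Units.map (φ : R →* S) y, by simp [powMonoidHom]⟩)

/-- The ring `𝔽₂[x]/(xⁿ)` of truncated polynomials. -/
abbrev Rtrunc (n : ℕ) : Type :=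
  Polynomial (ZMod 2) ⧸ Ideal.span {(Polynomial.X : Polynomial (ZMod 2)) ^ n}

/-- The class of `x` in `𝔽₂[x]/(xⁿ)`. -/
def xbar (n : ℕ) : Rtrunc n :=
  Ideal.Quotient.mk (Ideal.span {(Polynomial.X : Polynomial (ZMod 2)) ^ n}) Polynomial.X

/-- The canonical projection `𝔽₂[x]/(x^{n+1}) → 𝔽₂[x]/(xⁿ)`. -/
def truncMap (n : ℕ) : Rtrunc (n + 1) →+* Rtrunc n :=
  Ideal.Quotient.factor
    (Ideal.span_singleton_le_span_singleton.mpr (pow_dvd_pow Polynomial.X n.le_succ))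

open Polynomial Submodule

theorem cls_mul {R : Type} [CommRing R] (a b : Rˣ) : cls (a * b) = cls a * cls b := rfl

theorem cls_pow {R : Type} [CommRing R] (a : Rˣ) (m : ℕ) : cls (a ^ m) = cls a ^ m :=
  QuotientGroup.mk_pow (squareUnits R) a m

theorem cls_prod {R ι : Type} [CommRing R] (s : Finset ι) (f : ι → Rˣ) :
    cls (∏ i ∈ s, f i) = ∏ i ∈ s, cls (f i) :=
  map_prod (QuotientGroup.mk' (squareUnits R)) f s

theorem cls_eq_one_iff {R : Type} [CommRing R] {a : Rˣ} : cls a = 1 ↔ IsSquare a := by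
  change (a : Rˣ ⧸ squareUnits R) = 1 ↔ _
  rw [QuotientGroup.eq_one_iff, squareUnits, MonoidHom.mem_range]
  simp [IsSquare, sq, eq_comm]

theorem SqCl.sq_eq_one {R : Type} [CommRing R] (g : SqCl R) : g ^ 2 = 1 := by
  obtain ⟨a, rfl⟩ := QuotientGroup.mk_surjective g
  exact (cls_pow a 2).symm.trans (cls_eq_one_iff.mpr (IsSquare.sq a))

theorem ofMul_cls_eq_add {R : Type} [CommRing R] (a b : Rˣ) :
    Additive.ofMul (cls a) = Additive.ofMul (cls (a * b)) + Additive.ofMul (cls b) := by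
  rw [← ofMul_mul, cls_mul, mul_assoc, ← sq, SqCl.sq_eq_one, mul_one]

instance {R : Type} [CommRing R] : Module (ZMod 2) (Additive (SqCl R)) :=
  AddCommGroup.zmodModule fun g => SqCl.sq_eq_one g.toMul

theorem sum_smul_ofMul_cls {R ι : Type} [CommRing R] [Fintype ι] (v : ι → ZMod 2)
    (u : ι → Rˣ) :
    ∑ i, v i • Additive.ofMul (cls (u i)) = Additive.ofMul (cls (∏ i, u i ^ (v i).val)) := by
  rw [cls_prod, ofMul_prod]
  refine Finset.sum_congr rfl fun i _ => ?_
  rw [cls_pow, ofMul_pow]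
  rfl

namespace Rtrunc

variable {n : ℕ}

theorem two_eq_zero : (2 : Rtrunc n) = 0 := by
  calc (2 : Rtrunc n) = algebraMap (ZMod 2) (Rtrunc n) 2 := (map_ofNat _ 2).symm
    _ = 0 := map_zero _

theorem xbar_pow_eq_zero {m : ℕ} (h : n ≤ m) : xbar n ^ m = 0 := by
  rw [xbar, ← map_pow, Ideal.Quotient.eq_zero_iff_mem]
  exact Ideal.mem_span_singleton.mpr (pow_dvd_pow X h)

theorem isNilpotent_xbar : IsNilpotent (xbar n) := ⟨n, xbar_pow_eq_zero le_rfl⟩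

theorem isUnit_one_add_xbar_pow {d : ℕ} (hd : d ≠ 0) : IsUnit (1 + xbar n ^ d) :=
  (isNilpotent_xbar.pow_of_pos hd).isUnit_one_add

theorem exists_eq_xbar_mul_or_eq_one_add_xbar_mul (a : Rtrunc n) :
    ∃ c, a = xbar n * c ∨ a = 1 + xbar n * c := by
  obtain ⟨p, rfl⟩ := Ideal.Quotient.mk_surjective a
  have hp : Ideal.Quotient.mk _ p
      = xbar n * Ideal.Quotient.mk _ p.divX + Ideal.Quotient.mk _ (C (p.coeff 0)) := by
    rw [xbar, ← map_mul, ← map_add, X_mul_divX_add]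
  refine ⟨Ideal.Quotient.mk _ p.divX, ?_⟩
  obtain h | h : p.coeff 0 = 0 ∨ p.coeff 0 = 1 := by generalize p.coeff 0 = c; decide +revert
  · left; rw [hp, h, map_zero, map_zero, add_zero]
  · right; rw [hp, h, map_one, map_one, add_comm]

theorem exists_val_eq_one_add_xbar_mul (u : (Rtrunc n)ˣ) :
    ∃ b, (u : Rtrunc n) = 1 + xbar n * b := by
  obtain ⟨c, hc | hc⟩ := exists_eq_xbar_mul_or_eq_one_add_xbar_mul (u : Rtrunc n)
  · rcases subsingleton_or_nontrivial (Rtrunc n) with _ | _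
    · exact ⟨0, Subsingleton.elim _ _⟩
    · exact absurd u.isUnit
        (hc ▸ (Commute.all _ c).isNilpotent_mul_right isNilpotent_xbar).not_isUnit
  · exact ⟨c, hc⟩

theorem not_isSquare_one_add_xbar_pow {m : ℕ} (hm : Odd m) (hmn : m < n) :
    ¬IsSquare (1 + xbar n ^ m) := by
  rintro ⟨w, hw⟩
  obtain ⟨q, rfl⟩ := Ideal.Quotient.mk_surjective w
  rw [xbar, ← map_pow, ← map_one (Ideal.Quotient.mk _), ← map_add, ← map_mul,
    Ideal.Quotient.eq, Ideal.mem_span_singleton, X_pow_dvd_iff] at hw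
  have hcoeff := hw m hmn
  rw [← sq, ← ZMod.expand_card, coeff_sub, coeff_add, coeff_one, coeff_X_pow,
    coeff_expand two_pos, if_neg hm.pos.ne', if_pos rfl,
    if_neg (by simpa [Nat.odd_iff, Nat.dvd_iff_mod_eq_zero] using hm)] at hcoeff
  exact absurd hcoeff (by decide)

def truncHom {m : ℕ} (h : m ≤ n) : Rtrunc n →+* Rtrunc m :=
  Ideal.Quotient.factor (Ideal.span_singleton_le_span_singleton.mpr (pow_dvd_pow X h))

theorem truncHom_xbar {m : ℕ} (h : m ≤ n) : truncHom h (xbar n) = xbar m :=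
  Ideal.Quotient.factor_mk _ _

end Rtrunc

open Rtrunc

def oddUnit (n i : ℕ) : (Rtrunc n)ˣ := (isUnit_one_add_xbar_pow (2 * i).succ_ne_zero).unit

theorem val_oddUnit (n i : ℕ) : (oddUnit n i : Rtrunc n) = 1 + xbar n ^ (2 * i + 1) := rfl

def oddClass (n k : ℕ) (i : Fin (k + 1)) : Additive (SqCl (Rtrunc n)) :=
  Additive.ofMul (cls (oddUnit n i))

theorem truncHom_val_prod_oddUnit_pow {n k : ℕ} (g : Fin (k + 1) → ZMod 2) (j : Fin (k + 1))
    (hj : g j ≠ 0) (hlt : ∀ i < j, g i = 0) (h : 2 * (j : ℕ) + 2 ≤ n) :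
    truncHom h (∏ i : Fin (k + 1), oddUnit n i ^ (g i).val : (Rtrunc n)ˣ)
      = 1 + xbar _ ^ (2 * (j : ℕ) + 1) := by
  simp only [Units.coe_prod, Units.val_pow_eq_pow_val, val_oddUnit, map_prod, map_pow, map_add,
    map_one, truncHom_xbar]
  rw [Finset.prod_eq_single j]
  · rw [show (g j).val = 1 by revert hj; generalize g j = a; decide +revert, pow_one]
  · intro i _ hij
    rcases lt_or_gt_of_ne hij with hij | hij
    · rw [hlt i hij, ZMod.val_zero, pow_zero]
    · rw [xbar_pow_eq_zero (by simp only [Fin.lt_def] at hij; omega), add_zero, one_pow]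
  · exact fun h => absurd (Finset.mem_univ j) h

theorem linearIndependent_oddClass {n k : ℕ} (hk : 2 * k + 2 ≤ n) :
    LinearIndependent (ZMod 2) (oddClass n k) := by
  rw [Fintype.linearIndependent_iff]
  intro g hg
  by_contra! ⟨i, hi⟩
  obtain ⟨j, hj, hmin⟩ :=
    (Finset.univ.filter (g · ≠ 0)).exists_min_image id ⟨i, by simpa using hi⟩
  have hsq : IsSquare (∏ i : Fin (k + 1), oddUnit n i ^ (g i).val) := by
    rw [← cls_eq_one_iff, ← ofMul_eq_zero, ← sum_smul_ofMul_cls]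
    exact hg
  have hjn : 2 * (j : ℕ) + 2 ≤ n := by omega
  have := (hsq.map (Units.coeHom (Rtrunc n))).map (truncHom hjn)
  rw [Units.coeHom_apply, truncHom_val_prod_oddUnit_pow g j (by simpa using hj)
    (fun i hi => by_contra fun h => not_le.mpr hi (hmin i (by simpa using h))) hjn] at this
  exact not_isSquare_one_add_xbar_pow ⟨j, rfl⟩ (by omega) this

theorem exists_val_eq_one_add_xbar_pow_mem_span {n k : ℕ} (hk : n ≤ 2 * k + 3) {d : ℕ}
    (hd : d ≠ 0) (hdn : d < n) :
    ∃ v : (Rtrunc n)ˣ, (v : Rtrunc n) = 1 + xbar n ^ d ∧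
      Additive.ofMul (cls v) ∈ span (ZMod 2) (Set.range (oddClass n k)) := by
  obtain ⟨t, rfl | rfl⟩ := Nat.even_or_odd' d
  · refine ⟨(isUnit_one_add_xbar_pow (n := n) (by omega : t ≠ 0)).unit ^ 2, ?_, ?_⟩
    · rw [Units.val_pow_eq_pow_val, IsUnit.unit_spec]
      linear_combination xbar n ^ t * two_eq_zero
    · rw [cls_pow, SqCl.sq_eq_one, ofMul_one]
      exact zero_mem _
  · exact ⟨oddUnit n t, rfl, subset_span ⟨⟨t, by omega⟩, rfl⟩⟩

theorem ofMul_cls_mem_span_oddClass {n k : ℕ} (hk : n ≤ 2 * k + 3) {d : ℕ} (hd : d ≠ 0)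
    (u : (Rtrunc n)ˣ) (b : Rtrunc n) (hu : (u : Rtrunc n) = 1 + xbar n ^ d * b) :
    Additive.ofMul (cls u) ∈ span (ZMod 2) (Set.range (oddClass n k)) := by
  by_cases hdn : n ≤ d
  · obtain rfl : u = 1 := Units.ext (by rw [hu, xbar_pow_eq_zero hdn, zero_mul, add_zero]; rfl)
    exact zero_mem _
  obtain ⟨c, rfl | rfl⟩ := exists_eq_xbar_mul_or_eq_one_add_xbar_mul b
  · exact ofMul_cls_mem_span_oddClass hk d.add_one_ne_zero u c (by rw [hu]; ring)
  · obtain ⟨v, hv, hv_mem⟩ := exists_val_eq_one_add_xbar_pow_mem_span hk hd (not_le.mp hdn)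
    obtain ⟨e, rfl⟩ : ∃ e, d = e + 1 := ⟨d - 1, by omega⟩
    have huv : ((u * v : (Rtrunc n)ˣ) : Rtrunc n)
        = 1 + xbar n ^ (e + 2) * (xbar n ^ e + c + xbar n ^ (e + 1) * c) := by
      rw [Units.val_mul, hu, hv]
      linear_combination xbar n ^ (e + 1) * two_eq_zero
    rw [ofMul_cls_eq_add u v]
    exact add_mem (ofMul_cls_mem_span_oddClass hk (e + 1).add_one_ne_zero (u * v) _ huv) hv_mem
termination_by n - d

theorem span_oddClass_eq_top {n k : ℕ} (hk : n ≤ 2 * k + 3) :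
    span (ZMod 2) (Set.range (oddClass n k)) = ⊤ := by
  refine eq_top_iff.mpr fun g _ => ?_
  obtain ⟨u, rfl⟩ := QuotientGroup.mk_surjective g.toMul
  obtain ⟨b, hb⟩ := exists_val_eq_one_add_xbar_mul u
  exact ofMul_cls_mem_span_oddClass hk one_ne_zero u b (by rw [hb, pow_one])

/-- For `n ≥ 2` and `k := ⌊n/2⌋ − 1`, the map
`(ℤ/2)^{k+1} → G(𝔽₂[x]/(xⁿ))`, `(e₀,…,e_k) ↦ [∏ᵢ (1 + x^{2i+1})^{eᵢ}]`, is an isomorphism of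
abelian groups; i.e. the classes `[1+x], [1+x³], …, [1+x^{2k+1}]` form a basis of the
`𝔽₂`-vector space of square classes. -/
theorem sqcl_trunc_basis (n : ℕ) (hn : 2 ≤ n) (k : ℕ) (hk : k = n / 2 - 1) :
    ∃ e : (Fin (k + 1) → ZMod 2) ≃+ Additive (SqCl (Rtrunc n)),
      ∀ v : Fin (k + 1) → ZMod 2, ∃ u : (Rtrunc n)ˣ,
        (u : Rtrunc n) = ∏ i : Fin (k + 1), (1 + xbar n ^ (2 * (i : ℕ) + 1)) ^ (v i).val ∧
        e v = Additive.ofMul (cls u) := by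
  let b : Module.Basis (Fin (k + 1)) (ZMod 2) (Additive (SqCl (Rtrunc n))) :=
    .mk (linearIndependent_oddClass (by omega)) (span_oddClass_eq_top (by omega)).ge
  refine ⟨b.equivFun.symm.toAddEquiv,
    fun v => ⟨∏ i : Fin (k + 1), oddUnit n i ^ (v i).val, ?_, ?_⟩⟩
  · simp only [Units.coe_prod, Units.val_pow_eq_pow_val, val_oddUnit]
  · change b.equivFun.symm v = _
    rw [Module.Basis.equivFun_symm_apply]
    simp only [b, Module.Basis.mk_apply, oddClass]
    exact sum_smul_ofMul_cls v _

end
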